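/- In the model G(n, p_n; C([n],3)), if p_n · n² / log n → ∞, then the probability that the multigraph is connected tends to 1 as n → ∞. -/

import Mathlib

open scoped ENNReal

/-- Bernoulli with success probability `min q 1`. -/
noncomputable def bern (q : ℝ≥0∞) : PMF Bool := PMF.bernoulli (min q 1).toNNReal
  (by simpa using ENNReal.toNNReal_mono ENNReal.one_ne_top (min_le_right q 1))

/-- For a hyperedge `H`, choose a uniformly random doubleton `D ⊆ H` and output `some D`
with probability `p` (an edge is placed on `D`), `none` otherwise. -/
noncomputable def edgePMF {n : ℕ} (p : ℝ≥0∞) (H : Finset (Fin n)) :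
    PMF (Option (Finset (Fin n))) :=
  if h : (H.powersetCard 2).Nonempty then
    (PMF.uniformOfFinset _ h).bind fun D =>
      (bern p).map fun b => if b then some D else none
  else PMF.pure none

/-- The random multigraph `G(n, p; 𝓗)`: for each hyperedge of the list `𝓗` independently,
choose a uniformly random doubleton and join its two vertices by an edge with probability `p`.
The resulting multigraph is recorded as the multiset of its edges (doubletons, with
multiplicity). -/
noncomputable def modelPMF {n : ℕ} (p : ℝ≥0∞) :
    List (Finset (Fin n)) → PMF (Multiset (Finset (Fin n)))
  | [] => PMF.pure 0
  | H :: T => (edgePMF p H).bind fun o =>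
      (modelPMF p T).map fun G => o.elim G (fun D => D ::ₘ G)

/-- Probability that a sample from `μ` lies in `S`. -/
noncomputable def prob {α : Type*} (μ : PMF α) (S : Set α) : ℝ≥0∞ := μ.toOuterMeasure S

/-- The complete `k`-uniform hypergraph on `[n]`, as a list of hyperedges. -/
noncomputable def allSets (n k : ℕ) : List (Finset (Fin n)) :=
  ((Finset.univ : Finset (Fin n)).powersetCard k).toList

/-- Degree of a vertex in a multigraph: number of edges incident to it, with multiplicity. -/
def degOf {n : ℕ} (v : Fin n) (G : Multiset (Finset (Fin n))) : ℕ :=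
  Multiset.card (G.filter fun D => v ∈ D)

/-- Poisson-Binomial: number of successes in independent trials with the given success
probabilities. -/
noncomputable def pbPMF : List ℝ≥0∞ → PMF ℕ
  | [] => PMF.pure 0
  | q :: T => (bern q).bind fun b => (pbPMF T).map fun m => if b then m + 1 else m

/-- Binomial distribution `Bin(m, q)` on `ℕ`. -/
noncomputable def binomPMF (m : ℕ) (q : ℝ≥0∞) : PMF ℕ := pbPMF (List.replicate m q)

open Filter

/-- The simple graph underlying a multigraph: `i` and `j` are adjacent when `i ≠ j` and the
pair `{i,j}` occurs as an edge of the multigraph. -/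
def toSimpleGraph {n : ℕ} (G : Multiset (Finset (Fin n))) : SimpleGraph (Fin n) where
  Adj i j := i ≠ j ∧ ({i, j} : Finset (Fin n)) ∈ G
  symm := by
    constructor
    intro i j h
    exact ⟨h.1.symm, by rw [Finset.pair_comm]; exact h.2⟩
  loopless := by constructor; intro i h; exact h.1 rfl


/-!
If the multigraph is disconnected, some vertex set `M` with `1 ≤ |M| ≤ n/2` is crossed by no
edge. Each of the at least `|M| C(n-|M|, 2)` triples with one vertex in `M` and two outside
independently puts an edge across the cut with probability `2p/3`, so the cut survives with
probability at most `(1 - 2p/3)^(|M| C(n-|M|, 2)) ≤ exp(-p n² |M| / 24)`, which is at most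
`n^(-3|M|)` once `p n² ≥ 72 log n`. A union bound over the `C(n, m) ≤ n^m` sets of each size `m`
leaves `P(disconnected) ≤ (n + 1) / n² → 0`.
-/

open Finset

section Cut

variable {α : Type*} [DecidableEq α]

def Crosses (M D : Finset α) : Prop := (D ∩ M).Nonempty ∧ (D \ M).Nonempty

instance (M : Finset α) : DecidablePred (Crosses M) := fun _ => instDecidableAnd

lemma crosses_pair_iff {M : Finset α} {x y : α} : Crosses M {x, y} ↔ ¬(x ∈ M ↔ y ∈ M) := by
  simp only [Crosses, Finset.Nonempty, Finset.mem_inter, Finset.mem_sdiff, Finset.mem_insert,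
    Finset.mem_singleton, exists_eq_or_imp, exists_eq_left]
  tauto

lemma not_crosses_iff {M D : Finset α} : ¬Crosses M D ↔ D ⊆ M ∨ Disjoint D M := by
  rw [Crosses, not_and_or, not_nonempty_iff_eq_empty, not_nonempty_iff_eq_empty,
    ← disjoint_iff_inter_eq_empty, sdiff_eq_empty_iff_subset, or_comm]

lemma filter_not_crosses_powersetCard_subset (M H : Finset α) (k : ℕ) :
    {D ∈ H.powersetCard k | ¬Crosses M D} ⊆ (H ∩ M).powersetCard k ∪ (H \ M).powersetCard k := by
  intro D hD
  simp only [mem_filter, mem_powersetCard, not_crosses_iff] at hD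
  simp only [mem_union, mem_powersetCard, subset_inter_iff, subset_sdiff]
  tauto

lemma two_le_card_crosses_pairs {M H : Finset α} (hH : #H = 3) (hc : Crosses M H) :
    2 ≤ #{D ∈ H.powersetCard 2 | Crosses M D} := by
  have hsplit : #(H ∩ M) + #(H \ M) = 3 := by rw [add_comm, card_sdiff_add_card_inter, hH]
  have hside : (#(H ∩ M)).choose 2 + (#(H \ M)).choose 2 = 1 := by
    have := hc.1.card_pos
    have := hc.2.card_pos
    obtain h | h : #(H ∩ M) = 1 ∨ #(H ∩ M) = 2 := by omega
    all_goals rw [show #(H \ M) = 3 - #(H ∩ M) by omega, h]; rfl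
  have hnot : #{D ∈ H.powersetCard 2 | ¬Crosses M D} ≤ 1 :=
    calc _ ≤ #((H ∩ M).powersetCard 2 ∪ (H \ M).powersetCard 2) :=
          card_le_card (filter_not_crosses_powersetCard_subset M H 2)
      _ ≤ _ := card_union_le _ _
      _ = 1 := by rw [card_powersetCard, card_powersetCard, hside]
  have htotal := card_filter_add_card_filter_not (s := H.powersetCard 2) (fun D => Crosses M D)
  rw [card_powersetCard, hH, show (3 : ℕ).choose 2 = 3 from rfl] at htotal
  omega

variable [Fintype α]

lemma card_mul_choose_two_le_card_crosses_triples (M : Finset α) :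
    #M * (#Mᶜ).choose 2 ≤ #{H ∈ (univ : Finset α).powersetCard 3 | Crosses M H} := by
  have hsides : ∀ q ∈ M ×ˢ Mᶜ.powersetCard 2,
      insert q.1 q.2 ∩ M = {q.1} ∧ insert q.1 q.2 \ M = q.2 := by
    rintro ⟨u, P⟩ hq
    simp only [mem_product, mem_powersetCard, subset_compl_iff_disjoint_right] at hq
    exact ⟨by rw [insert_inter_of_mem hq.1, disjoint_iff_inter_eq_empty.mp hq.2.1, insert_empty],
      by rw [insert_sdiff_of_mem _ hq.1, sdiff_eq_self_of_disjoint hq.2.1]⟩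
  rw [← card_powersetCard, ← card_product]
  refine card_le_card_of_injOn (fun q => insert q.1 q.2) (fun q hq => ?_) ?_
  · obtain ⟨hM, hP⟩ := hsides q hq
    simp only [coe_product, Set.mem_prod, mem_coe, mem_powersetCard] at hq
    have hu : q.1 ∉ q.2 := fun h => mem_compl.mp (hq.2.1 h) hq.1
    simp only [coe_filter, mem_powersetCard, subset_univ, true_and, Set.mem_ofPred_eq]
    refine ⟨by rw [card_insert_of_notMem hu, hq.2.2], ?_, ?_⟩
    · rw [hM]; exact singleton_nonempty _
    · rw [hP]; exact card_pos.mp (by omega)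
  · intro q hq r hr h
    obtain ⟨hqM, hqP⟩ := hsides q hq
    obtain ⟨hrM, hrP⟩ := hsides r hr
    simp only at h
    exact Prod.ext (singleton_inj.mp (hqM ▸ hrM ▸ h ▸ rfl)) (hqP ▸ hrP ▸ h ▸ rfl)

end Cut

theorem SimpleGraph.exists_adj_closed_of_not_connected {V : Type*} [Fintype V] [Nonempty V]
    {G : SimpleGraph V} (h : ¬G.Connected) :
    ∃ M : Finset V, M.Nonempty ∧ 2 * #M ≤ Fintype.card V ∧
      ∀ ⦃x y⦄, G.Adj x y → (x ∈ M ↔ y ∈ M) := by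
  classical
  obtain ⟨i, j, hij⟩ : ∃ i j, ¬G.Reachable i j := by
    simpa [SimpleGraph.Preconnected, G.connected_iff] using h
  set C : Finset V := {x | G.Reachable i x}
  have hC : ∀ ⦃x y⦄, G.Adj x y → (x ∈ C ↔ y ∈ C) := fun x y hxy => by
    simp only [C, mem_filter, mem_univ, true_and]
    exact ⟨fun hx => hx.trans hxy.reachable, fun hy => hy.trans hxy.symm.reachable⟩
  by_cases hsmall : 2 * #C ≤ Fintype.card V
  · exact ⟨C, ⟨i, by simp [C]⟩, hsmall, hC⟩
  · refine ⟨Cᶜ, ⟨j, by simpa [C] using hij⟩, by rw [card_compl]; omega, fun x y hxy => ?_⟩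
    simpa only [mem_compl, not_iff_not] using hC hxy

section Probability

variable {α : Type*}

lemma prob_le_one (μ : PMF α) (S : Set α) : prob μ S ≤ 1 :=
  (μ.toOuterMeasure.mono (Set.subset_univ S)).trans_eq
    ((μ.toOuterMeasure_apply_eq_one_iff _).2 (Set.subset_univ _))

lemma prob_compl (μ : PMF α) (S : Set α) : prob μ Sᶜ = 1 - prob μ S := by
  refine ENNReal.eq_sub_of_add_eq ((prob_le_one μ S).trans_lt ENNReal.one_lt_top).ne ?_
  rw [prob, prob, μ.toOuterMeasure_apply, μ.toOuterMeasure_apply, ← ENNReal.tsum_add,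
    ← μ.tsum_coe]
  exact tsum_congr fun a => congr_fun (Set.indicator_compl_add_self S μ) a

end Probability

section Model

variable {n : ℕ} {p : ℝ≥0∞}

lemma bern_true (hp : p ≤ 1) : bern p true = p := by
  change ((min p 1).toNNReal : ℝ≥0∞) = p
  rw [min_eq_left hp, ENNReal.coe_toNNReal (ne_top_of_le_ne_top ENNReal.one_ne_top hp)]

lemma prob_edgePMF_exists (hp : p ≤ 1) {H : Finset (Fin n)} (hH : (H.powersetCard 2).Nonempty)
    (P : Finset (Fin n) → Prop) [DecidablePred P] :
    prob (edgePMF p H) {o | ∃ D ∈ o, P D} =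
      p * #{D ∈ H.powersetCard 2 | P D} / #(H.powersetCard 2) := by
  have hplaced : ∀ D, ((bern p).map fun b => if b then some D else none).toOuterMeasure
      {o | ∃ D ∈ o, P D} = {D | P D}.indicator (fun _ => p) D := by
    intro D
    rw [PMF.toOuterMeasure_map_apply]
    by_cases hD : P D
    · have hpre : (fun b : Bool => if b then some D else none) ⁻¹' {o | ∃ D ∈ o, P D} = {true} := by
        ext b; cases b <;> simp [hD]
      rw [hpre, PMF.toOuterMeasure_apply_singleton, bern_true hp]
      simp [hD]
    · have hpre : (fun b : Bool => if b then some D else none) ⁻¹' {o | ∃ D ∈ o, P D} = ∅ := by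
        ext b; cases b <;> simp [hD]
      rw [hpre, MeasureTheory.measure_empty]
      simp [hD]
  rw [prob, edgePMF, dif_pos hH, PMF.toOuterMeasure_bind_apply]
  simp_rw [hplaced, ← Set.indicator_mul_right, Set.indicator_mul_left]
  rw [ENNReal.tsum_mul_right, ← PMF.toOuterMeasure_apply, PMF.toOuterMeasure_uniformOfFinset_apply,
    mul_comm, mul_div_assoc]
  congr 4
  exact filter_congr_decidable _ _ _

lemma prob_edgePMF_forall_not_crosses_le (hp : p ≤ 1) {M H : Finset (Fin n)} (hH : #H = 3)
    (hc : Crosses M H) :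
    prob (edgePMF p H) {o | ∀ D ∈ o, ¬Crosses M D} ≤ 1 - 2 * p / 3 := by
  have hpairs : #(H.powersetCard 2) = 3 := by rw [card_powersetCard, hH]; rfl
  have hcompl : {o | ∀ D ∈ o, ¬Crosses M D} = {o : Option _ | ∃ D ∈ o, Crosses M D}ᶜ := by
    ext; simp
  rw [hcompl, prob_compl, prob_edgePMF_exists hp (card_pos.mp (by omega)), hpairs,
    Nat.cast_ofNat]
  refine tsub_le_tsub_left ?_ 1
  rw [mul_comm]
  gcongr
  exact_mod_cast two_le_card_crosses_pairs hH hc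

lemma prob_modelPMF_forall (P : Finset (Fin n) → Prop) :
    ∀ L : List (Finset (Fin n)), prob (modelPMF p L) {G | ∀ D ∈ G, P D} =
      (L.map fun H => prob (edgePMF p H) {o | ∀ D ∈ o, P D}).prod
  | [] => by simp [modelPMF, prob, PMF.toOuterMeasure_pure_apply]
  | H :: T => by
    have hcons : ∀ o : Option (Finset (Fin n)),
        ((modelPMF p T).map fun G => o.elim G (· ::ₘ G)).toOuterMeasure {G | ∀ D ∈ G, P D} =
          {o | ∀ D ∈ o, P D}.indicator (fun _ => prob (modelPMF p T) {G | ∀ D ∈ G, P D}) o := by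
      rintro (_ | E)
      · simp [PMF.toOuterMeasure_map_apply, prob]
      · by_cases hE : P E <;> simp [PMF.toOuterMeasure_map_apply, prob, hE]
    rw [modelPMF, List.map_cons, List.prod_cons, prob, PMF.toOuterMeasure_bind_apply,
      ← prob_modelPMF_forall P T]
    simp_rw [hcons, ← Set.indicator_mul_right, Set.indicator_mul_left]
    rw [ENNReal.tsum_mul_right, ← PMF.toOuterMeasure_apply]
    rfl

lemma card_eq_two_of_mem_support_edgePMF {H D : Finset (Fin n)}
    (h : some D ∈ (edgePMF p H).support) : #D = 2 := by
  unfold edgePMF at h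
  split_ifs at h
  · simp only [PMF.mem_support_bind_iff, PMF.mem_support_map_iff,
      PMF.mem_support_uniformOfFinset_iff, mem_powersetCard] at h
    obtain ⟨E, ⟨-, hE⟩, b, -, hb⟩ := h
    cases b
    · simp at hb
    · rwa [← Option.some_inj.mp hb]
  · simp at h

lemma card_eq_two_of_mem_support_modelPMF :
    ∀ {L : List (Finset (Fin n))} {G : Multiset (Finset (Fin n))},
      G ∈ (modelPMF p L).support → ∀ D ∈ G, #D = 2
  | [], G, hG => by simp_all [modelPMF]
  | H :: T, G, hG => by
    simp only [modelPMF, PMF.mem_support_bind_iff, PMF.mem_support_map_iff] at hG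
    obtain ⟨o, ho, G', hG', rfl⟩ := hG
    rcases o with _ | E
    · exact card_eq_two_of_mem_support_modelPMF hG'
    · simp only [Option.elim, Multiset.forall_mem_cons]
      exact ⟨card_eq_two_of_mem_support_edgePMF ho, card_eq_two_of_mem_support_modelPMF hG'⟩

end Model

section Estimates

open Real

lemma sq_div_sixteen_le_choose_two {n m : ℕ} (hn : 4 ≤ n) (hmn : 2 * m ≤ n) :
    (n : ℝ) ^ 2 / 16 ≤ ((n - m).choose 2 : ℕ) := by
  rw [Nat.cast_choose_two, Nat.cast_sub (by omega)]
  have hn' : (4 : ℝ) ≤ n := by exact_mod_cast hn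
  have hmn' : 2 * (m : ℝ) ≤ n := by exact_mod_cast hmn
  nlinarith

lemma choose_mul_pow_le_inv_sq {n m : ℕ} {q : ℝ} (h0 : 0 ≤ q) (h1 : q ≤ 1) (hn : 4 ≤ n)
    (hq : 72 * log n ≤ q * n ^ 2) (hm : 0 < m) (hmn : 2 * m ≤ n) :
    (n.choose m : ℝ) * (1 - 2 * q / 3) ^ (m * (n - m).choose 2) ≤ ((n : ℝ) ^ 2)⁻¹ := by
  have hpos : (0 : ℝ) < n := by positivity
  have hL : 0 ≤ log n := log_nonneg (by exact_mod_cast (show 1 ≤ n by omega))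
  have hexp : ∀ k : ℕ, (n : ℝ) ^ k = exp (k * log n) := fun k => by
    rw [exp_nat_mul, exp_log hpos]
  have hchoose : (n.choose m : ℝ) ≤ exp (m * log n) := by
    rw [← hexp]; exact_mod_cast Nat.choose_le_pow n m
  have hdecay : (1 - 2 * q / 3) ^ (m * (n - m).choose 2) ≤ exp (-(3 * m * log n)) := by
    have hk := sq_div_sixteen_le_choose_two hn hmn
    calc (1 - 2 * q / 3) ^ (m * (n - m).choose 2)
        ≤ exp (-(2 * q / 3)) ^ (m * (n - m).choose 2) :=
          pow_le_pow_left₀ (by linarith) (one_sub_le_exp_neg _) _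
      _ = exp ((m * (n - m).choose 2 : ℕ) * -(2 * q / 3)) := (exp_nat_mul _ _).symm
      _ ≤ exp (-(3 * m * log n)) := by
          rw [exp_le_exp]
          push_cast
          -- `(2q/3) · m · n²/16 ≥ 3 m log n` is exactly `q n² ≥ 72 log n`
          nlinarith [mul_le_mul_of_nonneg_left hk (by positivity : (0 : ℝ) ≤ q * m)]
  calc (n.choose m : ℝ) * (1 - 2 * q / 3) ^ (m * (n - m).choose 2)
      ≤ exp (m * log n) * exp (-(3 * m * log n)) :=
        mul_le_mul hchoose hdecay (pow_nonneg (by linarith) _) (exp_pos _).le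
    _ = exp (-(2 * m * log n)) := by rw [← exp_add]; ring_nf
    _ ≤ exp (-(2 * log n)) := by
        rw [exp_le_exp]
        nlinarith [(show (1 : ℝ) ≤ m by exact_mod_cast hm)]
    _ = ((n : ℝ) ^ 2)⁻¹ := by rw [hexp, exp_neg]; push_cast; ring_nf

end Estimates

section Connectivity

variable {n : ℕ} {p : ℝ≥0∞}

lemma prob_modelPMF_forall_not_crosses_le (hp : p ≤ 1) (M : Finset (Fin n)) :
    prob (modelPMF p (allSets n 3)) {G | ∀ D ∈ G, ¬Crosses M D} ≤
      (1 - 2 * p / 3) ^ (#M * (n - #M).choose 2) := by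
  set T : Finset (Finset (Fin n)) := {H ∈ univ.powersetCard 3 | Crosses M H}
  have hT := card_mul_choose_two_le_card_crosses_triples M
  rw [card_compl, Fintype.card_fin] at hT
  rw [prob_modelPMF_forall, allSets, prod_map_toList]
  calc _ ≤ ∏ H ∈ T, prob (edgePMF p H) {o | ∀ D ∈ o, ¬Crosses M D} :=
        prod_le_prod_of_subset_of_le_one' (filter_subset _ _) fun H _ _ => prob_le_one _ _
    _ ≤ (1 - 2 * p / 3) ^ #T := prod_le_pow_card _ _ _ fun H hH => by
        obtain ⟨hH3, hc⟩ := mem_filter.1 hH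
        exact prob_edgePMF_forall_not_crosses_le hp (mem_powersetCard.1 hH3).2 hc
    _ ≤ _ := pow_le_pow_of_le_one zero_le tsub_le_self hT

lemma exists_cut_of_not_connected (hn : 0 < n) {G : Multiset (Finset (Fin n))}
    (hG : ∀ D ∈ G, #D = 2) (hc : ¬(toSimpleGraph G).Connected) :
    ∃ M : Finset (Fin n), M.Nonempty ∧ 2 * #M ≤ n ∧ ∀ D ∈ G, ¬Crosses M D := by
  have : Nonempty (Fin n) := ⟨⟨0, hn⟩⟩
  obtain ⟨M, hM, hsize, hclosed⟩ := SimpleGraph.exists_adj_closed_of_not_connected hc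
  refine ⟨M, hM, by simpa using hsize, fun D hD => ?_⟩
  obtain ⟨x, y, hxy, rfl⟩ := card_eq_two.1 (hG D hD)
  rw [crosses_pair_iff, not_not]
  exact hclosed ⟨hxy, hD⟩

lemma prob_not_connected_le_sum (hp : p ≤ 1) (hn : 0 < n) :
    prob (modelPMF p (allSets n 3)) {G | ¬(toSimpleGraph G).Connected} ≤
      ∑ m ∈ range (n + 1), n.choose m •
        if 0 < m ∧ 2 * m ≤ n then (1 - 2 * p / 3) ^ (m * (n - m).choose 2) else 0 := by
  set μ := modelPMF p (allSets n 3)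
  set f : ℕ → ℝ≥0∞ := fun m =>
    if 0 < m ∧ 2 * m ≤ n then (1 - 2 * p / 3) ^ (m * (n - m).choose 2) else 0
  set 𝓜 : Finset (Finset (Fin n)) := {M | 0 < #M ∧ 2 * #M ≤ n}
  have hcover : {G | ¬(toSimpleGraph G).Connected} ∩ μ.support ⊆
      ⋃ M ∈ 𝓜, {G | ∀ D ∈ G, ¬Crosses M D} := by
    rintro G ⟨hG, hsupp⟩
    obtain ⟨M, hM, hsize, hcut⟩ :=
      exists_cut_of_not_connected hn (card_eq_two_of_mem_support_modelPMF hsupp) hG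
    exact Set.mem_biUnion (by simp [𝓜, hM, hsize]) hcut
  calc prob μ _ ≤ ∑ M ∈ 𝓜, prob μ {G | ∀ D ∈ G, ¬Crosses M D} :=
        (μ.toOuterMeasure_mono hcover).trans (MeasureTheory.measure_biUnion_finset_le _ _)
    _ ≤ ∑ M ∈ 𝓜, (1 - 2 * p / 3) ^ (#M * (n - #M).choose 2) :=
        sum_le_sum fun M _ => prob_modelPMF_forall_not_crosses_le hp M
    _ = ∑ M ∈ (univ : Finset (Fin n)).powerset, f #M := by rw [powerset_univ, sum_filter]
    _ = _ := by rw [sum_powerset_apply_card, card_univ, Fintype.card_fin]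

lemma one_sub_two_mul_ofReal_div_three {q : ℝ} (hq : 0 ≤ q) :
    1 - 2 * ENNReal.ofReal q / 3 = ENNReal.ofReal (1 - 2 * q / 3) := by
  rw [ENNReal.ofReal_sub _ (by positivity), ENNReal.ofReal_one,
    ENNReal.ofReal_div_of_pos (by norm_num), ENNReal.ofReal_mul (by norm_num)]
  norm_num

lemma prob_not_connected_le {q : ℝ} (h0 : 0 ≤ q) (h1 : q ≤ 1) (hn : 4 ≤ n)
    (hq : 72 * Real.log n ≤ q * n ^ 2) :
    prob (modelPMF (ENNReal.ofReal q) (allSets n 3)) {G | ¬(toSimpleGraph G).Connected} ≤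
      ENNReal.ofReal (2 / n) := by
  refine (prob_not_connected_le_sum (ENNReal.ofReal_le_one.2 h1) (by omega)).trans ?_
  have hterm : ∀ m ∈ range (n + 1), n.choose m • (if 0 < m ∧ 2 * m ≤ n then
      (1 - 2 * ENNReal.ofReal q / 3) ^ (m * (n - m).choose 2) else 0) ≤
        ENNReal.ofReal ((n : ℝ) ^ 2)⁻¹ := by
    intro m _
    split_ifs with hm
    · rw [one_sub_two_mul_ofReal_div_three h0, nsmul_eq_mul, ← ENNReal.ofReal_natCast,
        ← ENNReal.ofReal_pow (by linarith), ← ENNReal.ofReal_mul (by positivity)]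
      exact ENNReal.ofReal_le_ofReal (choose_mul_pow_le_inv_sq h0 h1 hn hq hm.1 hm.2)
    · simp
  refine (sum_le_sum hterm).trans ?_
  rw [sum_const, card_range, nsmul_eq_mul, ← ENNReal.ofReal_natCast,
    ← ENNReal.ofReal_mul (by positivity)]
  apply ENNReal.ofReal_le_ofReal
  have hn' : (4 : ℝ) ≤ n := by exact_mod_cast hn
  rw [← div_eq_mul_inv, div_le_div_iff₀ (by positivity) (by positivity)]
  push_cast
  nlinarith

end Connectivity

/-- Connectivity threshold (upper side) for `G(n, p_n; C([n],3))`: if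
`p_n n² / log n → ∞` then the multigraph is connected with probability tending to `1`. -/
theorem tendsto_one_connected (p : ℕ → ℝ) (hp : ∀ n, 0 ≤ p n ∧ p n ≤ 1)
    (h : Tendsto (fun n => p n * (n : ℝ) ^ 2 / Real.log n) atTop atTop) :
    Tendsto (fun n => prob (modelPMF (ENNReal.ofReal (p n)) (allSets n 3))
        {G | (toSimpleGraph G).Connected}) atTop (nhds 1) := by
  have hbound : ∀ᶠ n : ℕ in atTop, prob (modelPMF (ENNReal.ofReal (p n)) (allSets n 3))
      {G | ¬(toSimpleGraph G).Connected} ≤ ENNReal.ofReal (2 / n) := by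
    filter_upwards [h.eventually_ge_atTop 72, eventually_ge_atTop 4] with n hlarge hn
    have hlog : 0 < Real.log n := Real.log_pos (by exact_mod_cast (show 1 < n by omega))
    rw [le_div_iff₀ hlog] at hlarge
    exact prob_not_connected_le (hp n).1 (hp n).2 hn hlarge
  have hdisc : Tendsto (fun n => prob (modelPMF (ENNReal.ofReal (p n)) (allSets n 3))
      {G | ¬(toSimpleGraph G).Connected}) atTop (nhds 0) := by
    refine tendsto_of_tendsto_of_tendsto_of_le_of_le' tendsto_const_nhds ?_
      (Eventually.of_forall fun _ => zero_le) hbound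
    simpa using ENNReal.tendsto_ofReal (tendsto_const_div_atTop_nhds_zero_nat (2 : ℝ))
  have hconn := ENNReal.Tendsto.sub (tendsto_const_nhds (x := 1)) hdisc (Or.inr ENNReal.zero_ne_top)
  simp_rw [← prob_compl, Set.compl_ofPred, not_not, tsub_zero] at hconn
  exact hconn
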